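/- Let $A$ be a unital associative ring and let $m, n \ge 2$ be integers. Then for all $a_1, \dots, a_m, b_1, \dots, b_n \in A$, the commutator $\bigl[[a_1, \dots, a_m], [b_1, \dots, b_n]\bigr]$ belongs to $T^{(m+n)}(A)$. -/

import Mathlib

/-- The ring commutator `[a, b] = a * b - b * a`. -/
def brk {A : Type*} [NonUnitalNonAssocRing A] (a b : A) : A := a * b - b * a

/-- The left-normed commutator `[a 0, a 1, ..., a (k-1)]`. -/
def lnc {A : Type*} [NonUnitalNonAssocRing A] : ∀ {k : ℕ}, (Fin k → A) → A
  | 0, _ => 0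
  | 1, a => a 0
  | k + 2, a => brk (lnc (Fin.init a)) (a (Fin.last (k + 1)))

/-- `T A m` is the two-sided ideal of `A` generated by all left-normed commutators
of length `m` (for `m = 1` this is all of `A`). -/
def T (A : Type*) [NonUnitalNonAssocRing A] (m : ℕ) : TwoSidedIdeal A :=
  TwoSidedIdeal.span {x | ∃ a : Fin m → A, x = lnc a}

/-!
Jacobi's identity `[u, [c, d]] = [[u, c], d] - [[u, d], c]` lets one peel the last entry off
`[b₁, …, bₙ]`; both resulting terms are brackets of a longer left-normed commutator with a shorter
one, so induction on `n` shows that `[[a₁, …, aₘ], [b₁, …, bₙ]]` is an integer combination of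
left-normed commutators of length `m + n`.
-/

/-- Additive (not ideal) span, since right-bracketing with a fixed element preserves it. -/
def lncSpan (A : Type*) [NonUnitalNonAssocRing A] (k : ℕ) : AddSubgroup A :=
  AddSubgroup.closure {x | ∃ c : Fin k → A, x = lnc c}

section

variable {A : Type*}

lemma lnc_snoc [NonUnitalNonAssocRing A] {k : ℕ} (c : Fin (k + 1) → A) (x : A) :
    lnc (Fin.snoc c x) = brk (lnc c) x := by
  simp [lnc, Fin.init_snoc, Fin.snoc_last]

lemma lnc_mem_lncSpan [NonUnitalNonAssocRing A] {k : ℕ} (c : Fin k → A) : lnc c ∈ lncSpan A k :=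
  AddSubgroup.subset_closure ⟨c, rfl⟩

lemma brk_mem_lncSpan_succ [NonUnitalNonAssocRing A] {k : ℕ} {z : A}
    (hz : z ∈ lncSpan A (k + 1)) (d : A) : brk z d ∈ lncSpan A (k + 2) := by
  have hle : lncSpan A (k + 1) ≤
      (lncSpan A (k + 2)).comap (AddMonoidHom.mulRight d - AddMonoidHom.mulLeft d) :=
    (AddSubgroup.closure_le _).2 <| by
      rintro _ ⟨c, rfl⟩
      show brk (lnc c) d ∈ lncSpan A (k + 2)
      rw [← lnc_snoc]
      exact lnc_mem_lncSpan _
  exact hle hz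

lemma mem_T_of_mem_lncSpan [NonUnitalNonAssocRing A] {k : ℕ} {x : A} (hx : x ∈ lncSpan A k) :
    x ∈ T A k :=
  AddSubgroup.closure_induction (fun _ hy => TwoSidedIdeal.subset_span hy) (zero_mem _)
    (fun _ _ _ _ => add_mem) (fun _ _ => neg_mem) hx

lemma brk_jacobi [NonUnitalRing A] (u c d : A) :
    brk u (brk c d) = brk (brk u c) d - brk (brk u d) c := by
  simp only [brk]
  noncomm_ring

lemma brk_lnc_mem_lncSpan [NonUnitalRing A] (n : ℕ) :
    ∀ {m : ℕ} (a : Fin (m + 1) → A) (b : Fin (n + 1) → A),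
      brk (lnc a) (lnc b) ∈ lncSpan A (m + 1 + (n + 1)) := by
  induction n with
  | zero =>
    intro m a b
    rw [show lnc b = b 0 from rfl, ← lnc_snoc]
    exact lnc_mem_lncSpan _
  | succ n ih =>
    intro m a b
    set d := b (Fin.last (n + 1))
    have hb : lnc b = brk (lnc (Fin.init b)) d := rfl
    rw [hb, brk_jacobi]
    refine sub_mem (brk_mem_lncSpan_succ (ih a (Fin.init b)) d) ?_
    rw [← lnc_snoc, show m + 1 + (n + 1 + 1) = m + 1 + 1 + (n + 1) by omega]
    exact ih (Fin.snoc a d) (Fin.init b)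

end

theorem comm_comm_mem_general {A : Type*} [Ring A] (m n : ℕ)
    (a : Fin m → A) (b : Fin n → A) :
    brk (lnc a) (lnc b) ∈ T A (m + n) := by
  rcases m with _ | m
  · simp [lnc, brk]
  rcases n with _ | n
  · simp [lnc, brk]
  exact mem_T_of_mem_lncSpan (brk_lnc_mem_lncSpan n a b)

theorem comm_comm_mem {A : Type*} [Ring A] (m n : ℕ) (hm : 2 ≤ m) (hn : 2 ≤ n)
    (a : Fin m → A) (b : Fin n → A) :
    brk (lnc a) (lnc b) ∈ T A (m + n) :=
  comm_comm_mem_general m n a b
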